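/- The two-variable symmetry identity holds: for all b, c ≥ 0 and parameters η, ω, 𝔅𝔇_{a;b+c}^{[k,m-1]}(γ,η;λ) = Σ_{n=0}^{b} Σ_{q=0}^{c} C(b,n) C(c,q) (η-ω)^{n+q} · 𝔅𝔇_{a;b+c-n-q}^{[k,m-1]}(γ,ω;λ), where 𝔅𝔇_{a;N}^{[k,m-1]}(γ,η;λ) denotes the N-th generalized Apostol-Bernoulli poly-Daehee polynomial. -/

import Mathlib

open PowerSeries Finset

noncomputable section

variable (F : Type*) [Field F] [CharZero F]

/-- Exponential generating function `Σ c n * x^n / n!`. -/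
def egf (c : ℕ → F) : PowerSeries F := PowerSeries.mk fun n => c n / n.factorial

/-- `log(1+x)` as a formal power series. -/
def logOnePlus : PowerSeries F := PowerSeries.mk fun n => if n = 0 then 0 else (-1) ^ (n + 1) / n

/-- `e^{-x}` as a formal power series. -/
def expNeg : PowerSeries F := PowerSeries.mk fun n => (-1) ^ n / n.factorial

/-- `Li_k(1 - e^{-x})`: since `(1-e^{-x})^m` has order `≥ m`, the `n`-th coefficient of the
composition is the finite sum `Σ_{m=1}^{n} m^{-k} * coeff n ((1-e^{-x})^m)`. -/
def liComp (k : ℤ) : PowerSeries F :=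
  PowerSeries.mk fun n => ∑ m ∈ Finset.range (n + 1),
    (if m = 0 then 0 else ((m : F) ^ k)⁻¹) * PowerSeries.coeff n ((1 - expNeg F) ^ m)

/-- `(1+x)^γ = Σ_j (γ)_j x^j/j!` with `(γ)_j = γ(γ-1)⋯(γ-j+1)` the falling factorial. -/
def onePlusPow (γ : F) : PowerSeries F := egf F fun j => ∏ i ∈ Finset.range j, (γ - i)

/-- Truncated exponential `Σ_{l<m} x^l/l!`. -/
def truncExp (m : ℕ) : PowerSeries F :=
  PowerSeries.mk fun l => if l < m then ((l.factorial : F))⁻¹ else 0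

/-- `λ e^x - Σ_{l<m} x^l/l!`, the denominator in the generalized Apostol-Bernoulli
generating function. -/
def bden (lam : F) (m : ℕ) : PowerSeries F := PowerSeries.C lam * PowerSeries.exp F - truncExp F m

/-! Cancelling the nonzero factor `Li_k(1 - e^{-x}) (λ e^x - Σ_{l<m} x^l/l!)^a` from the two
generating-function identities gives `Σ BD_N x^N/N! = e^{(η-ω)x} Σ BDw_N x^N/N!`, so `BD` is the
binomial convolution `BD_N = Σ_j C(N,j) (η-ω)^j BDw_{N-j}`. For `N = b + c`, splitting
`C(b+c,j) = Σ_{n+q=j} C(b,n) C(c,q)` (Vandermonde) turns this into the double sum. -/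

theorem sum_range_choose_mul_choose_nsmul {M : Type*} [AddCommMonoid M] (b c : ℕ) (G : ℕ → M) :
    ∑ n ∈ range (b + 1), ∑ q ∈ range (c + 1), (b.choose n * c.choose q) • G (n + q) =
      ∑ j ∈ range (b + c + 1), (b + c).choose j • G j := by
  set P := range (b + 1) ×ˢ range (c + 1)
  have hP : ∀ x ∈ P, x.1 + x.2 ∈ range (b + c + 1) := by
    simp only [P, mem_product, mem_range]; omega
  rw [← sum_product', ← sum_fiberwise_of_maps_to hP]
  refine sum_congr rfl fun j _ => ?_
  have hfiber : ∑ x ∈ P with x.1 + x.2 = j, b.choose x.1 * c.choose x.2 =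
      ∑ x ∈ antidiagonal j, b.choose x.1 * c.choose x.2 := by
    refine sum_subset (fun x hx => by simpa using (mem_filter.1 hx).2) fun x hx hxP => ?_
    have hout : ¬(x.1 ≤ b ∧ x.2 ≤ c) := by
      simpa [P, Nat.lt_succ_iff, mem_antidiagonal.1 hx] using hxP
    rcases not_and_or.1 hout with h | h <;> simp [Nat.choose_eq_zero_of_lt (not_le.1 h)]
  rw [Nat.add_choose_eq, ← hfiber, sum_smul]
  exact sum_congr rfl fun x hx => by rw [(mem_filter.1 hx).2]

theorem egf_injective : Function.Injective (egf F) := by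
  intro f g h
  funext N
  have hN := congrArg (coeff N) h
  simp only [egf, coeff_mk] at hN
  exact (div_left_inj' (Nat.cast_ne_zero.2 N.factorial_ne_zero)).1 hN

theorem egf_mul_egf (f g : ℕ → F) :
    egf F f * egf F g =
      egf F fun N => ∑ x ∈ antidiagonal N, (N.choose x.1 : F) * f x.1 * g x.2 := by
  ext N
  simp only [egf, coeff_mul, coeff_mk, sum_div]
  refine sum_congr rfl fun x hx => ?_
  rw [← mem_antidiagonal.1 hx, Nat.cast_add_choose]
  have hfac := (x.1 + x.2).factorial_ne_zero
  field_simp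

theorem rescale_exp_eq_egf (y : F) : rescale y (exp F) = egf F (y ^ ·) := by
  ext n
  simp [egf, coeff_exp, div_eq_mul_inv]

theorem apply_add_eq_of_egf_eq_rescale_exp_mul (y : F) (f g : ℕ → F)
    (h : egf F f = rescale y (exp F) * egf F g) (b c : ℕ) :
    f (b + c) = ∑ n ∈ range (b + 1), ∑ q ∈ range (c + 1),
      (b.choose n : F) * (c.choose q : F) * y ^ (n + q) * g (b + c - n - q) := by
  rw [rescale_exp_eq_egf, egf_mul_egf] at h
  have hconv := congrFun (egf_injective F h) (b + c)
  rw [Nat.sum_antidiagonal_eq_sum_range_succ_mk] at hconv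
  calc f (b + c) = ∑ j ∈ range (b + c + 1), (b + c).choose j • (y ^ j * g (b + c - j)) := by
        simp [hconv, nsmul_eq_mul, mul_assoc]
    _ = _ := by
        rw [← sum_range_choose_mul_choose_nsmul]
        simp [nsmul_eq_mul, Nat.sub_sub, mul_assoc]

theorem coeff_liComp_one (F : Type*) [Field F] (k : ℤ) : coeff 1 (liComp F k) = 1 := by
  simp [liComp, expNeg, sum_range_succ]

theorem liComp_ne_zero (F : Type*) [Field F] (k : ℤ) : liComp F k ≠ 0 := fun h => by
  simpa [h] using coeff_liComp_one F k

theorem coeff_bden (lam : F) (m n : ℕ) :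
    coeff n (bden F lam m) = (lam - if n < m then 1 else 0) / n.factorial := by
  simp only [bden, truncExp, map_sub, coeff_C_mul, coeff_exp, coeff_mk]
  split_ifs <;> simp [div_eq_mul_inv, sub_mul]

theorem bden_ne_zero (lam : F) {m : ℕ} (hm : 1 ≤ m) : bden F lam m ≠ 0 := fun h => by
  have h0 := congrArg (coeff 0) h
  have hm' := congrArg (coeff m) h
  simp [coeff_bden, show 0 < m from hm, Nat.factorial_ne_zero] at h0 hm'
  simp [hm'] at h0

theorem gabpdp_implicit_summation (k : ℤ) (m a : ℕ) (hm : 1 ≤ m)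
    (γ η ω lam : F) (BD BDw : ℕ → F)
    (hBD : liComp F k * bden F lam m ^ a * egf F BD =
      onePlusPow F γ * logOnePlus F * PowerSeries.X ^ (m * a) *
        PowerSeries.rescale η (PowerSeries.exp F))
    (hBDw : liComp F k * bden F lam m ^ a * egf F BDw =
      onePlusPow F γ * logOnePlus F * PowerSeries.X ^ (m * a) *
        PowerSeries.rescale ω (PowerSeries.exp F)) :
    ∀ b c : ℕ, BD (b + c) =
      ∑ n ∈ Finset.range (b + 1), ∑ q ∈ Finset.range (c + 1),
        (b.choose n : F) * (c.choose q : F) * (η - ω) ^ (n + q) * BDw (b + c - n - q) := by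
  have hL : liComp F k * bden F lam m ^ a ≠ 0 :=
    mul_ne_zero (liComp_ne_zero F k) (pow_ne_zero _ (bden_ne_zero F lam hm))
  have hexp : rescale η (exp F) = rescale (η - ω) (exp F) * rescale ω (exp F) := by
    rw [exp_mul_exp_eq_exp_add, sub_add_cancel]
  have hshift : egf F BD = rescale (η - ω) (exp F) * egf F BDw := by
    refine mul_left_cancel₀ hL ?_
    rw [hBD, mul_left_comm, hBDw, hexp]
    ring
  exact apply_add_eq_of_egf_eq_rescale_exp_mul F (η - ω) BD BDw hshift
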